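/- Let n ≥ 3, ψ a permutation-symmetric state of n qudits, and X an invertible matrix such that φ := X_{(1)}ψ is in the symmetric subspace. Then there exists a matrix S with S^n = X, S_{(1)}ψ in the symmetric subspace, and S^{⊗n} ψ = φ. -/

import Mathlib

open Matrix BigOperators Polynomial

/-- Permutation symmetry of an `n`-qudit state represented by its amplitudes. -/
def PSym {n d : ℕ} (ψ : (Fin n → Fin d) → ℂ) : Prop :=
  ∀ σ : Equiv.Perm (Fin n), ∀ x : Fin n → Fin d, ψ (x ∘ σ) = ψ x

/-- The operator `B` acting on the `k`-th tensor factor (identity elsewhere). -/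
noncomputable def appAt {n d : ℕ} (k : Fin n) (B : Matrix (Fin d) (Fin d) ℂ)
    (ψ : (Fin n → Fin d) → ℂ) : (Fin n → Fin d) → ℂ :=
  fun x => ∑ j : Fin d, B (x k) j * ψ (Function.update x k j)

/-- The operator `A 1 ⊗ A 2 ⊗ ⋯ ⊗ A n` acting on an `n`-qudit state. -/
noncomputable def appAll {n d : ℕ} (A : Fin n → Matrix (Fin d) (Fin d) ℂ)
    (ψ : (Fin n → Fin d) → ℂ) : (Fin n → Fin d) → ℂ :=
  fun x => ∑ y : Fin n → Fin d, (∏ k, A k (x k) (y k)) * ψ y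

/-!
An invertible `X` has an `n`-th root `S = f(X)` that is a polynomial in `X`: interpolate `n`-th
roots of the eigenvalues and refine by Newton's method in `ℂ[X] ⧸ (χ_X)`, which works because
`χ_X(0) ≠ 0`. Symmetry of `ψ` and of `X₍₁₎ψ` gives `X₍ₖ₎ψ = X₍₁₎ψ` for every factor `k`; operators
on different factors commute, so the same holds for every polynomial in `X`, in particular for
`S`. Hence `S₍₁₎ψ` is symmetric, and the factors of `S^{⊗n}` can be moved onto the first factor
one at a time: `S^{⊗n}ψ = (S^n)₍₁₎ψ = X₍₁₎ψ`.
-/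

namespace Polynomial

variable {k : Type*} [Field k] [IsAlgClosed k]

theorem dvd_pow_natDegree_of_forall_isRoot {p q : k[X]} (hp : p ≠ 0)
    (h : ∀ a, p.IsRoot a → q.IsRoot a) : p ∣ q ^ p.natDegree := by
  have hsplit : C p.leadingCoeff * (p.roots.map fun a => X - C a).prod = p :=
    C_leadingCoeff_mul_prod_multiset_X_sub_C IsAlgClosed.card_roots_eq_natDegree
  have hprod : (p.roots.map fun a => X - C a).prod ∣ (p.roots.map fun _ => q).prod :=
    Multiset.prod_dvd_prod_of_dvd _ _ fun a ha =>
      dvd_iff_isRoot.mpr (h a (isRoot_of_mem_roots ha))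
  rw [Multiset.map_const', Multiset.prod_replicate, IsAlgClosed.card_roots_eq_natDegree] at hprod
  conv_lhs => rw [← hsplit]
  exact (isUnit_C.mpr (leadingCoeff_ne_zero.mpr hp).isUnit).mul_left_dvd.mpr hprod

theorem exists_dvd_pow_sub_X {p : k[X]} (hp : p.eval 0 ≠ 0) {n : ℕ} (hn : (n : k) ≠ 0) :
    ∃ f : k[X], p ∣ f ^ n - X := by
  classical
  have hn0 : n ≠ 0 := by rintro rfl; simp at hn
  have hp0 : p ≠ 0 := by rintro rfl; simp at hp
  choose μ hμ using fun a : k => IsAlgClosed.exists_pow_nat_eq a (Nat.pos_of_ne_zero hn0)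
  set g : k[X] := Lagrange.interpolate p.roots.toFinset id μ
  have hg : ∀ a, p.IsRoot a → g.eval a = μ a := fun a ha =>
    Lagrange.eval_interpolate_at_node μ (Set.injOn_id _)
      (Multiset.mem_toFinset.mpr ((mem_roots hp0).mpr ha))
  have hgn : p ∣ (g ^ n - X) ^ p.natDegree :=
    dvd_pow_natDegree_of_forall_isRoot hp0 fun a ha => by simp [hg a ha, hμ]
  have hcop : IsCoprime g p := by
    refine (isCoprime_iff_aeval_ne_zero_of_isAlgClosed k k g p).mpr fun a => ?_
    by_cases ha : p.IsRoot a
    · left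
      have ha0 : a ≠ 0 := by rintro rfl; exact hp ha
      rw [coe_aeval_eq_eval, hg a ha]
      exact fun h => ha0 (by rw [← hμ a, h, zero_pow hn0])
    · right; simpa using ha
  let P : (AdjoinRoot p)[X] := X ^ n - C (AdjoinRoot.root p)
  obtain ⟨u, v, huv⟩ := hcop
  have hunit : IsUnit (AdjoinRoot.mk p g) := IsUnit.of_mul_eq_one_right (AdjoinRoot.mk p u) <| by
    simpa using congrArg (AdjoinRoot.mk p) huv
  have hnil : IsNilpotent (aeval (AdjoinRoot.mk p g) P) :=
    ⟨p.natDegree, by simpa [P] using AdjoinRoot.mk_eq_zero.mpr hgn⟩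
  have hder : IsUnit (aeval (AdjoinRoot.mk p g) (derivative P)) := by
    have : IsUnit (n : AdjoinRoot p) := by
      simpa using (isUnit_iff_ne_zero.mpr hn).map (algebraMap k (AdjoinRoot p))
    simpa [P, derivative_X_pow] using this.mul (hunit.pow (n - 1))
  obtain ⟨r, -, hr⟩ := (existsUnique_nilpotent_sub_and_aeval_eq_zero hnil hder).exists
  obtain ⟨f, rfl⟩ := AdjoinRoot.mk_surjective r
  exact ⟨f, AdjoinRoot.mk_eq_zero.mp (by simpa [P] using hr)⟩

end Polynomial

theorem Matrix.exists_aeval_pow_eq_of_isUnit_det {k ι : Type*} [Field k] [IsAlgClosed k]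
    [Fintype ι] [DecidableEq ι] {M : Matrix ι ι k} (hM : IsUnit M.det) {n : ℕ}
    (hn : (n : k) ≠ 0) : ∃ f : k[X], aeval M f ^ n = M := by
  have hp : M.charpoly.eval 0 ≠ 0 := by
    rw [← coeff_zero_eq_eval_zero]
    intro h
    exact hM.ne_zero (by rw [det_eq_sign_charpoly_coeff, h, mul_zero])
  obtain ⟨f, g, hg⟩ := exists_dvd_pow_sub_X hp hn
  refine ⟨f, sub_eq_zero.mp ?_⟩
  simpa [aeval_self_charpoly] using congrArg (aeval M) hg

theorem Module.End.aeval_apply_eq_of_commute {R V : Type*} [CommSemiring R] [AddCommMonoid V]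
    [Module R V] {a b : Module.End R V} (hab : Commute a b) {v : V} (h : a v = b v) (f : R[X]) :
    aeval a f v = aeval b f v := by
  have hpow : ∀ m : ℕ, (a ^ m) v = (b ^ m) v := by
    intro m
    induction m with
    | zero => rfl
    | succ m ih =>
      calc (a ^ (m + 1)) v = (a ^ m) (b v) := by rw [pow_succ, Module.End.mul_apply, h]
        _ = b ((a ^ m) v) := by
          rw [← Module.End.mul_apply, (hab.pow_left m).eq, Module.End.mul_apply]
        _ = (b ^ (m + 1)) v := by rw [ih, pow_succ', Module.End.mul_apply]
  simp only [aeval_eq_sum_range, LinearMap.sum_apply, LinearMap.smul_apply, hpow]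

section TensorAction

variable {n d : ℕ}

theorem appAt_one (k : Fin n) (ψ : (Fin n → Fin d) → ℂ) : appAt k 1 ψ = ψ := by
  funext x
  simp [appAt, Matrix.one_apply]

theorem appAt_mul (k : Fin n) (B C : Matrix (Fin d) (Fin d) ℂ) (ψ : (Fin n → Fin d) → ℂ) :
    appAt k (B * C) ψ = appAt k B (appAt k C ψ) := by
  funext x
  simp only [appAt, Function.update_self, Function.update_idem, Matrix.mul_apply,
    Finset.sum_mul, Finset.mul_sum, mul_assoc]
  exact Finset.sum_comm

theorem appAt_comm {k l : Fin n} (hkl : k ≠ l) (B C : Matrix (Fin d) (Fin d) ℂ)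
    (ψ : (Fin n → Fin d) → ℂ) : appAt k B (appAt l C ψ) = appAt l C (appAt k B ψ) := by
  funext x
  simp only [appAt, Finset.mul_sum, Function.update_of_ne hkl.symm, Function.update_of_ne hkl,
    Function.update_comm hkl]
  rw [Finset.sum_comm]
  exact Finset.sum_congr rfl fun i _ => Finset.sum_congr rfl fun j _ => by ring

variable (n d) in
noncomputable def appAtAlgHom (k : Fin n) :
    Matrix (Fin d) (Fin d) ℂ →ₐ[ℂ] Module.End ℂ ((Fin n → Fin d) → ℂ) where
  toFun B :=
    { toFun := appAt k B
      map_add' ψ φ := by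
        funext x
        simp [appAt, mul_add, Finset.sum_add_distrib]
      map_smul' c ψ := by
        funext x
        simp [appAt, Finset.mul_sum, mul_left_comm] }
  map_one' := LinearMap.ext (appAt_one k)
  map_mul' B C := LinearMap.ext (appAt_mul k B C)
  map_zero' := LinearMap.ext fun ψ => by
    funext x
    simp [appAt]
  map_add' B C := LinearMap.ext fun ψ => by
    funext x
    simp [appAt, add_mul, Finset.sum_add_distrib]
  commutes' c := LinearMap.ext fun ψ => by
    funext x
    simp [appAt, Matrix.algebraMap_matrix_apply, ite_mul]

theorem appAtAlgHom_apply (k : Fin n) (B : Matrix (Fin d) (Fin d) ℂ) (ψ : (Fin n → Fin d) → ℂ) :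
    appAtAlgHom n d k B ψ = appAt k B ψ := rfl

theorem appAt_aeval_eq_of_forall {k₀ : Fin n} {B : Matrix (Fin d) (Fin d) ℂ}
    {ψ : (Fin n → Fin d) → ℂ} (hB : ∀ k, appAt k B ψ = appAt k₀ B ψ) (f : ℂ[X]) (k : Fin n) :
    appAt k (aeval B f) ψ = appAt k₀ (aeval B f) ψ := by
  rcases eq_or_ne k k₀ with rfl | hk
  · rfl
  have hcomm : Commute (appAtAlgHom n d k B) (appAtAlgHom n d k₀ B) :=
    LinearMap.ext (appAt_comm hk B B)
  simpa only [← appAtAlgHom_apply, aeval_algHom_apply] using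
    Module.End.aeval_apply_eq_of_commute hcomm (hB k) f

theorem appAt_comp_perm {ψ : (Fin n → Fin d) → ℂ} (hψ : PSym ψ) (σ : Equiv.Perm (Fin n))
    (k : Fin n) (B : Matrix (Fin d) (Fin d) ℂ) (x : Fin n → Fin d) :
    appAt k B ψ (x ∘ σ) = appAt (σ k) B ψ x := by
  refine Finset.sum_congr rfl fun j _ => ?_
  rw [← hψ σ (Function.update x (σ k) j), Function.update_comp_equiv, Equiv.symm_apply_apply]
  rfl

theorem PSym.appAt_iff {ψ : (Fin n → Fin d) → ℂ} (hψ : PSym ψ) (k₀ : Fin n)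
    (B : Matrix (Fin d) (Fin d) ℂ) :
    PSym (appAt k₀ B ψ) ↔ ∀ k, appAt k B ψ = appAt k₀ B ψ := by
  constructor
  · intro hsym k
    funext x
    rw [← hsym (Equiv.swap k₀ k) x, appAt_comp_perm hψ, Equiv.swap_apply_left]
  · intro hB σ x
    rw [appAt_comp_perm hψ, hB]

theorem appAll_one (ψ : (Fin n → Fin d) → ℂ) : appAll (fun _ => 1) ψ = ψ := by
  funext x
  simp [appAll, Matrix.one_apply, Finset.prod_boole, ← funext_iff]

theorem appAt_appAll (a : Fin n) (B : Matrix (Fin d) (Fin d) ℂ)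
    (A : Fin n → Matrix (Fin d) (Fin d) ℂ) (ψ : (Fin n → Fin d) → ℂ) :
    appAt a B (appAll A ψ) = appAll (Function.update A a (B * A a)) ψ := by
  funext x
  simp only [appAt, appAll, Finset.mul_sum]
  rw [Finset.sum_comm]
  refine Finset.sum_congr rfl fun y _ => ?_
  have hrest : ∀ j, ∏ k ∈ {a}ᶜ, A k (Function.update x a j k) (y k)
      = ∏ k ∈ {a}ᶜ, Function.update A a (B * A a) k (x k) (y k) := fun j =>
    Finset.prod_congr rfl fun k hk => by
      have hka : k ≠ a := by simpa using hk
      rw [Function.update_of_ne hka, Function.update_of_ne hka]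
  simp only [Fintype.prod_eq_mul_prod_compl a, Function.update_self, hrest, Matrix.mul_apply,
    Finset.sum_mul]
  exact Finset.sum_congr rfl fun j _ => by ring

theorem appAll_const_eq_appAt_pow {k₀ : Fin n} {S : Matrix (Fin d) (Fin d) ℂ}
    {ψ : (Fin n → Fin d) → ℂ} (hS : ∀ k, appAt k S ψ = appAt k₀ S ψ) :
    appAll (fun _ => S) ψ = appAt k₀ (S ^ n) ψ := by
  have hstep : ∀ (k : Fin n) (m : ℕ),
      appAt k S (appAt k₀ (S ^ m) ψ) = appAt k₀ (S ^ (m + 1)) ψ := by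
    intro k m
    rcases eq_or_ne k k₀ with rfl | hk
    · rw [pow_succ', appAt_mul]
    · rw [appAt_comm hk, hS, pow_succ, appAt_mul]
  have hmask : ∀ s : Finset (Fin n),
      appAll (fun k => if k ∈ s then S else 1) ψ = appAt k₀ (S ^ s.card) ψ := by
    intro s
    induction s using Finset.induction_on with
    | empty => simp [appAll_one, appAt_one]
    | insert a s ha ih =>
      have hupd : (fun k => if k ∈ insert a s then S else 1)
          = Function.update (fun k => if k ∈ s then S else 1) a (S * if a ∈ s then S else 1) := by
        funext k
        by_cases hk : k = a <;> simp [hk, ha]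
      rw [hupd, ← appAt_appAll, ih, hstep, Finset.card_insert_of_notMem ha]
  simpa using hmask Finset.univ

end TensorAction

theorem stmt_7 {n d : ℕ} (hn : 3 ≤ n) (ψ : (Fin n → Fin d) → ℂ) (hψ : PSym ψ)
    (X : Matrix (Fin d) (Fin d) ℂ) (hX : IsUnit X.det)
    (hsym : PSym (appAt ⟨0, by omega⟩ X ψ)) :
    ∃ S : Matrix (Fin d) (Fin d) ℂ,
      S ^ n = X ∧ PSym (appAt ⟨0, by omega⟩ S ψ) ∧
        appAll (fun _ => S) ψ = appAt ⟨0, by omega⟩ X ψ := by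
  obtain ⟨f, hf⟩ := Matrix.exists_aeval_pow_eq_of_isUnit_det hX (n := n) (by norm_cast; omega)
  have hS := appAt_aeval_eq_of_forall ((hψ.appAt_iff _ X).mp hsym) f
  exact ⟨aeval X f, hf, (hψ.appAt_iff _ _).mpr hS, by rw [appAll_const_eq_appAt_pow hS, hf]⟩
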